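/- Let b = (b₁,b₂,b₃,b₄) with each b_l ∈ ℂ∖{0}, let θ = θ(b), let (i,j,k) be a cyclic permutation of (1,2,3), and assume b_i²b₄² ≠ 1. Let x ∈ ℂ³ be the point x_i = b_ib₄ + (b_ib₄)⁻¹, x_j = G(b_i,b₄;b_j,b_k), x_k = G(b_i,b₄;b_k,b_j). Then y_i(x,θ) = ((b_i − b_i⁻¹)(b₄ − b₄⁻¹)/(b_i²b₄² − 1)²) · ∏_{(ε_j,ε_k) ∈ {±1}²} (b_i·b_j^{ε_j}·b_k^{ε_k}·b₄ − 1), the product being over the four choices of signs ε_j, ε_k ∈ {+1,−1}. -/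

import Mathlib

/-- `G(u,v;w,s)` from the fixed-point formulas. -/
noncomputable def Gfun (u v w s : ℂ) : ℂ :=
  (u + v) * (w + s) * (w * s + 1) / (2 * (u * v + 1) * w * s)
    + (u - v) * (w - s) * (w * s - 1) / (2 * (u * v - 1) * w * s)

/-- The factorization of `y_i` at the point `P(b_i,b₄;b_j,b_k)`:
`y_i(x,θ) = ((b_i − b_i⁻¹)(b₄ − b₄⁻¹)/(b_i²b₄² − 1)²) · ∏_{ε_j,ε_k ∈ {±1}} (b_i b_j^{ε_j} b_k^{ε_k} b₄ − 1)`. -/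
theorem yi_factorization_at_P
    (bi bj bk b4 : ℂ) (hbi : bi ≠ 0) (hbj : bj ≠ 0) (hbk : bk ≠ 0) (hb4 : b4 ≠ 0)
    (h : bi ^ 2 * b4 ^ 2 ≠ 1) :
    (fun ai aj ak a4 =>
      (fun θi =>
        (fun xi xj xk =>
          2 * xi + xj * xk - θi =
            ((bi - bi⁻¹) * (b4 - b4⁻¹) / (bi ^ 2 * b4 ^ 2 - 1) ^ 2) *
              ((bi * bj * bk * b4 - 1) * (bi * bj * bk⁻¹ * b4 - 1)
                * (bi * bj⁻¹ * bk * b4 - 1) * (bi * bj⁻¹ * bk⁻¹ * b4 - 1)))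
        (bi * b4 + (bi * b4)⁻¹) (Gfun bi b4 bj bk) (Gfun bi b4 bk bj))
      (ai * a4 + aj * ak))
    (bi + bi⁻¹) (bj + bj⁻¹) (bk + bk⁻¹) (b4 + b4⁻¹) := by
  have hsq : bi ^ 2 * b4 ^ 2 - 1 ≠ 0 := sub_ne_zero.mpr h
  obtain ⟨hplus, hminus⟩ : bi * b4 + 1 ≠ 0 ∧ bi * b4 - 1 ≠ 0 :=
    mul_ne_zero_iff.mp fun hc => hsq (by linear_combination hc)
  simp only [Gfun]
  field_simp
  ring
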